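/- arXiv:2312.16936 — 3 statements merged into one kernel-verified Lean document; each statement's English description precedes it below -/
import Mathlib

section
/- Let K : (Fin n → ℝ) →ₗ[ℝ] (Fin m → ℝ) and L : (Fin n → ℝ) →ₗ[ℝ] (Fin n → ℝ) be linear maps with ker K ∩ ker L = {0}, let y : Fin m → ℝ, and let α > 0. Then the functional J(x) = ‖K x − y‖₂² + α * ‖L x‖₁, where ‖·‖₂ is the Euclidean norm and ‖v‖₁ = Σ_i |v i|, attains its minimum: there exists x* : Fin n → ℝ such that J(x*) ≤ J(x) for all x : Fin n → ℝ. -/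
/-!
`J` factors as `x ↦ g (K x, L x)` with `g (u, v) = ‖u - y‖₂² + α ‖v‖₁`, which is continuous and
tends to `+∞` at infinity of `ℝᵐ × ℝⁿ` since each of its two summands does in its own variable.
As `ker K ∩ ker L = 0`, the linear map `x ↦ (K x, L x)` is injective, hence a closed embedding,
so `J` is coercive as well and attains its minimum.
-/

open Finset Filter

theorem tendsto_sum_apply_cocompact_atTop {ι : Type*} [Fintype ι] {X : ι → Type*}
    [∀ i, TopologicalSpace (X i)] {φ : ∀ i, X i → ℝ} (hφ : ∀ i x, 0 ≤ φ i x)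
    (h : ∀ i, Tendsto (φ i) (cocompact (X i)) atTop) :
    Tendsto (fun x => ∑ i, φ i (x i)) (cocompact (∀ i, X i)) atTop := by
  rw [← coprodᵢ_cocompact, Filter.coprodᵢ, tendsto_iSup]
  refine fun i => tendsto_atTop_mono (fun x => ?_) ((h i).comp tendsto_comap)
  exact single_le_sum (fun j _ => hφ j (x j)) (mem_univ i)

theorem tendsto_add_fst_snd_cocompact_atTop {X Y : Type*} [TopologicalSpace X]
    [TopologicalSpace Y] {f : X → ℝ} {g : Y → ℝ} (hf₀ : ∀ x, 0 ≤ f x) (hg₀ : ∀ y, 0 ≤ g y)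
    (hf : Tendsto f (cocompact X) atTop) (hg : Tendsto g (cocompact Y) atTop) :
    Tendsto (fun p : X × Y => f p.1 + g p.2) (cocompact (X × Y)) atTop := by
  rw [← coprod_cocompact, Filter.coprod, tendsto_sup]
  exact ⟨(hf.comp tendsto_comap).atTop_add_nonneg fun p => hg₀ p.2,
    Tendsto.nonneg_add_atTop (fun p => hf₀ p.1) (hg.comp tendsto_comap)⟩

theorem tendsto_sub_sq_cocompact_atTop (c : ℝ) :
    Tendsto (fun t : ℝ => (t - c) ^ 2) (cocompact ℝ) atTop := by
  have := (tendsto_pow_atTop two_ne_zero).comp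
    (tendsto_norm_cocompact_atTop.comp (Homeomorph.subRight c).isClosedEmbedding.tendsto_cocompact)
  simpa [Function.comp_def, sq_abs] using this

/-- Existence of minimizers of the Tikhonov-type graph-Laplacian functional
`J(x) = ‖K x − y‖₂² + α * ‖L x‖₁` when `ker K ∩ ker L = {0}`. -/
theorem exists_minimizer_graph_functional
    (n m : ℕ)
    (K : (Fin n → ℝ) →ₗ[ℝ] (Fin m → ℝ))
    (L : (Fin n → ℝ) →ₗ[ℝ] (Fin n → ℝ))
    (hker : LinearMap.ker K ⊓ LinearMap.ker L = ⊥)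
    (y : Fin m → ℝ) (α : ℝ) (hα : 0 < α) :
    ∃ xstar : Fin n → ℝ, ∀ x : Fin n → ℝ,
      (∑ j, (K xstar j - y j) ^ 2) + α * ∑ i, |L xstar i| ≤
        (∑ j, (K x j - y j) ^ 2) + α * ∑ i, |L x i| := by
  have hfid : Tendsto (fun u : Fin m → ℝ => ∑ j, (u j - y j) ^ 2) (cocompact _) atTop :=
    tendsto_sum_apply_cocompact_atTop (φ := fun j t => (t - y j) ^ 2) (fun _ _ => sq_nonneg _)
      fun j => tendsto_sub_sq_cocompact_atTop (y j)
  have hreg : Tendsto (fun v : Fin n → ℝ => α * ∑ i, |v i|) (cocompact _) atTop :=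
    (tendsto_sum_apply_cocompact_atTop (φ := fun _ t => |t|) (fun _ _ => abs_nonneg _)
      fun _ => tendsto_norm_cocompact_atTop).const_mul_atTop hα
  have hg := tendsto_add_fst_snd_cocompact_atTop
    (fun u => sum_nonneg fun j _ => sq_nonneg (u j - y j))
    (fun v => mul_nonneg hα.le (sum_nonneg fun i _ => abs_nonneg (v i))) hfid hreg
  have hKL : Tendsto (K.prod L) (cocompact _) (cocompact _) :=
    (LinearMap.isClosedEmbedding_of_injective (by rwa [LinearMap.ker_prod])).tendsto_cocompact
  have hJ_cont : Continuous fun x => (∑ j, (K x j - y j) ^ 2) + α * ∑ i, |L x i| := by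
    have := K.continuous_of_finiteDimensional
    have := L.continuous_of_finiteDimensional
    fun_prop
  have hJ := hg.comp hKL
  simp only [Function.comp_def, LinearMap.prod_apply] at hJ
  exact hJ_cont.exists_forall_le hJ
end

section
/- Let K be an m × n real matrix and α > 0, and define the Tikhonov reconstructor R_α(y) = (Kᵀ K + α • I)⁻¹ (Kᵀ y) for y : Fin m → ℝ. Then R_α is Lipschitz continuous with constant 1/(2√α): for all y₁, y₂ : Fin m → ℝ, ‖R_α(y₁) − R_α(y₂)‖₂ ≤ ‖y₁ − y₂‖₂ / (2 * √α), where ‖·‖₂ is the Euclidean norm. -/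
/-!
Write `M = KᵀK + α I` and let `x = R_α y₁ - R_α y₂`, `d = y₁ - y₂`, so that `M x = Kᵀ d`.
Pairing with `x` gives `α ‖x‖² + ‖Kx‖² = ⟪Kx, d⟫`, and `0 ≤ ‖2Kx - d‖²` turns this into
`4α ‖x‖² ≤ ‖d‖²`. The same identity with `d = 0` shows that `M` is invertible.
-/

namespace Matrix

variable {ι κ R : Type*} [Fintype ι] [DecidableEq ι] [Fintype κ]

theorem mul_dotProduct_self_add_mulVec_dotProduct_mulVec_of_mulVec_eq [CommRing R]
    {K : Matrix κ ι R} {α : R} {x : ι → R} {d : κ → R}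
    (h : (Kᵀ * K + α • 1) *ᵥ x = Kᵀ *ᵥ d) :
    α * (x ⬝ᵥ x) + K *ᵥ x ⬝ᵥ K *ᵥ x = K *ᵥ x ⬝ᵥ d := by
  have hpair := congrArg (x ⬝ᵥ ·) h
  simp only [add_mulVec, ← mulVec_mulVec, smul_mulVec, one_mulVec, dotProduct_add,
    dotProduct_smul, smul_eq_mul, dotProduct_mulVec x Kᵀ, vecMul_transpose] at hpair
  linear_combination hpair

theorem four_mul_mul_dotProduct_self_le_of_mulVec_eq
    [CommRing R] [LinearOrder R] [IsStrictOrderedRing R]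
    {K : Matrix κ ι R} {α : R} {x : ι → R} {d : κ → R}
    (h : (Kᵀ * K + α • 1) *ᵥ x = Kᵀ *ᵥ d) :
    4 * α * (x ⬝ᵥ x) ≤ d ⬝ᵥ d := by
  have henergy := mul_dotProduct_self_add_mulVec_dotProduct_mulVec_of_mulVec_eq h
  have hsq : 0 ≤ ((2 : R) • (K *ᵥ x) - d) ⬝ᵥ ((2 : R) • (K *ᵥ x) - d) :=
    Finset.sum_nonneg fun i _ ↦ mul_self_nonneg _
  simp only [sub_dotProduct, dotProduct_sub, smul_dotProduct, dotProduct_smul, dotProduct_comm d,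
    smul_eq_mul] at hsq
  linear_combination 4 * henergy + hsq

theorem isUnit_transpose_mul_self_add_smul_one [Field R] [LinearOrder R] [IsStrictOrderedRing R]
    {K : Matrix κ ι R} {α : R} (hα : 0 < α) :
    IsUnit (Kᵀ * K + α • 1) := by
  refine mulVec_injective_iff_isUnit.mp fun x y hxy ↦ ?_
  have hnormal : (Kᵀ * K + α • 1) *ᵥ (x - y) = Kᵀ *ᵥ 0 := by
    rw [mulVec_sub, hxy, sub_self, mulVec_zero]
  have hbound := four_mul_mul_dotProduct_self_le_of_mulVec_eq hnormal
  rw [zero_dotProduct] at hbound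
  have hself : (x - y) ⬝ᵥ (x - y) = 0 :=
    le_antisymm (nonpos_of_mul_nonpos_right hbound (by positivity))
      (Finset.sum_nonneg fun i _ ↦ mul_self_nonneg _)
  exact sub_eq_zero.mp (dotProduct_self_eq_zero.mp hself)

end Matrix

open Matrix

/-- The Tikhonov reconstructor `R_α(y) = (Kᵀ K + α • I)⁻¹ (Kᵀ y)` is Lipschitz with
constant `1 / (2√α)` in the Euclidean norm. -/
theorem tikhonov_reconstructor_lipschitz
    (n m : ℕ)
    (K : Matrix (Fin m) (Fin n) ℝ)
    (α : ℝ) (hα : 0 < α)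
    (Rα : (Fin m → ℝ) → (Fin n → ℝ))
    (hR : ∀ y : Fin m → ℝ,
      Rα y = (Kᵀ * K + α • (1 : Matrix (Fin n) (Fin n) ℝ))⁻¹.mulVec (Kᵀ.mulVec y)) :
    ∀ y₁ y₂ : Fin m → ℝ,
      Real.sqrt (∑ i, (Rα y₁ i - Rα y₂ i) ^ 2) ≤
        Real.sqrt (∑ j, (y₁ j - y₂ j) ^ 2) / (2 * Real.sqrt α) := by
  intro y₁ y₂
  have hnormal : (Kᵀ * K + α • 1) *ᵥ (Rα y₁ - Rα y₂) = Kᵀ *ᵥ (y₁ - y₂) := by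
    rw [hR, hR, ← mulVec_sub, ← mulVec_sub, mulVec_mulVec,
      mul_nonsing_inv _ ((isUnit_iff_isUnit_det _).mp (isUnit_transpose_mul_self_add_smul_one hα)),
      one_mulVec]
  have hbound := four_mul_mul_dotProduct_self_le_of_mulVec_eq hnormal
  simp only [dotProduct, Pi.sub_apply, ← sq] at hbound
  rw [le_div_iff₀ (by positivity)]
  calc √(∑ i, (Rα y₁ i - Rα y₂ i) ^ 2) * (2 * √α)
      = √(4 * α * ∑ i, (Rα y₁ i - Rα y₂ i) ^ 2) := by
        rw [Real.sqrt_mul (by positivity), Real.sqrt_mul zero_le_four,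
          show (4 : ℝ) = 2 ^ 2 by norm_num, Real.sqrt_sq zero_le_two]
        ring
    _ ≤ √(∑ j, (y₁ j - y₂ j) ^ 2) := Real.sqrt_le_sqrt hbound
end

section
/- Let K be an m × n real matrix and let y : Fin m → ℝ lie in the range of K (viewed as a linear map ℝⁿ → ℝᵐ). Let x† be the unique solution of K x = y that is Euclidean-orthogonal to the kernel of K (the minimum-norm solution). Then the Tikhonov reconstructions converge to x† as the regularization parameter tends to zero: (Kᵀ K + α • I)⁻¹ (Kᵀ y) → x† as α → 0⁺, in the Euclidean norm on ℝⁿ. -/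
/-!
The minimum-norm solution lies in `(ker K)ᗮ = range (KᵀK)`, so `x† = KᵀK w` for some `w`
(the source condition). Writing `A = KᵀK` and `M = A + α`, the exact-data error is
`M⁻¹ A x† - x† = -α M⁻¹ A w`, and `M⁻¹ A` is a contraction because `A` is positive
semidefinite. Hence the error is at most `α ‖w‖`.
-/

open Finset Matrix Filter

namespace Matrix

variable {m n : Type*} [Fintype m] [Fintype n] [DecidableEq m] [DecidableEq n]

theorem exists_transpose_mul_self_mulVec_eq_of_orthogonal_ker (K : Matrix m n ℝ) {x : n → ℝ}
    (hx : ∀ z, K *ᵥ z = 0 → x ⬝ᵥ z = 0) : ∃ w, (Kᵀ * K) *ᵥ w = x := by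
  set T := toEuclideanLin K
  have hmem : WithLp.toLp 2 x ∈ (T.adjoint ∘ₗ T).range := by
    rw [LinearMap.range_adjoint_comp_self, ← LinearMap.orthogonal_ker]
    intro z hz
    simpa [EuclideanSpace.inner_eq_star_dotProduct, dotProduct_comm] using
      hx z.ofLp (congrArg WithLp.ofLp hz)
  obtain ⟨w, hw⟩ := hmem
  refine ⟨w.ofLp, ?_⟩
  rw [← toEuclideanLin_conjTranspose_eq_adjoint] at hw
  simpa [T, ← mulVec_mulVec] using congrArg WithLp.ofLp hw

theorem inv_add_smul_one_mulVec_mulVec {R : Type*} [CommRing R] {A : Matrix n n R} {α : R}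
    (h : IsUnit (A + α • 1).det) (x : n → R) :
    (A + α • 1)⁻¹ *ᵥ (A *ᵥ x) = x - α • ((A + α • 1)⁻¹ *ᵥ x) := by
  have hAx : A *ᵥ x = (A + α • 1) *ᵥ x - α • x := by
    rw [add_mulVec, smul_mulVec, one_mulVec, add_sub_cancel_right]
  rw [hAx, mulVec_sub, mulVec_mulVec, nonsing_inv_mul _ h, one_mulVec, mulVec_smul]

theorem PosSemidef.isUnit_det_add_smul_one {A : Matrix n n ℝ} (hA : A.PosSemidef) {α : ℝ}
    (hα : 0 < α) : IsUnit (A + α • 1).det :=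
  (PosDef.posSemidef_add hA (PosDef.one.smul hα)).det_pos.ne'.isUnit

theorem PosSemidef.dotProduct_self_inv_add_smul_one_mulVec_mulVec_le {A : Matrix n n ℝ}
    (hA : A.PosSemidef) {α : ℝ} (hα : 0 < α) (w : n → ℝ) :
    ((A + α • 1)⁻¹ *ᵥ (A *ᵥ w)) ⬝ᵥ ((A + α • 1)⁻¹ *ᵥ (A *ᵥ w)) ≤ w ⬝ᵥ w := by
  have hunit := hA.isUnit_det_add_smul_one hα
  set v := (A + α • 1)⁻¹ *ᵥ w
  have hu : (A + α • 1)⁻¹ *ᵥ (A *ᵥ w) = w - α • v := inv_add_smul_one_mulVec_mulVec hunit w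
  have hwv : w ⬝ᵥ v = v ⬝ᵥ (A *ᵥ v) + α * (v ⬝ᵥ v) := by
    conv_lhs => rw [← one_mulVec w, ← mul_nonsing_inv _ hunit, ← mulVec_mulVec]
    rw [add_mulVec, smul_mulVec, one_mulVec, add_dotProduct, smul_dotProduct, smul_eq_mul,
      dotProduct_comm]
  have hAv : 0 ≤ v ⬝ᵥ (A *ᵥ v) := by simpa using hA.dotProduct_mulVec_nonneg v
  have hvv : 0 ≤ v ⬝ᵥ v := dotProduct_self_star_nonneg v
  rw [hu]
  calc (w - α • v) ⬝ᵥ (w - α • v) = w ⬝ᵥ w - 2 * α * (w ⬝ᵥ v) + α ^ 2 * (v ⬝ᵥ v) := by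
        simp only [sub_dotProduct, dotProduct_sub, smul_dotProduct, dotProduct_smul,
          smul_eq_mul, dotProduct_comm v w]
        ring
    _ = w ⬝ᵥ w - 2 * α * (v ⬝ᵥ (A *ᵥ v)) - α ^ 2 * (v ⬝ᵥ v) := by rw [hwv]; ring
    _ ≤ w ⬝ᵥ w := by nlinarith

end Matrix

theorem tikhonov_error_le_of_source_condition {m n : Type*} [Fintype m] [Fintype n]
    [DecidableEq n] (K : Matrix m n ℝ) {x w : n → ℝ} (hw : (Kᵀ * K) *ᵥ w = x) {α : ℝ}
    (hα : 0 < α) :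
    Real.sqrt (∑ i, (((Kᵀ * K + α • 1)⁻¹ *ᵥ (Kᵀ *ᵥ (K *ᵥ x))) i - x i) ^ 2)
      ≤ α * Real.sqrt (w ⬝ᵥ w) := by
  have hA : (Kᵀ * K).PosSemidef := by
    simpa only [conjTranspose_eq_transpose_of_trivial] using posSemidef_conjTranspose_mul_self K
  set u := (Kᵀ * K + α • 1)⁻¹ *ᵥ ((Kᵀ * K) *ᵥ w)
  have herr : ∀ i, ((Kᵀ * K + α • 1)⁻¹ *ᵥ (Kᵀ *ᵥ (K *ᵥ x))) i - x i = -α * u i := by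
    intro i
    rw [mulVec_mulVec x Kᵀ K, inv_add_smul_one_mulVec_mulVec (hA.isUnit_det_add_smul_one hα), ← hw]
    simp [u]
  calc _ = Real.sqrt (α ^ 2 * (u ⬝ᵥ u)) := by
        simp only [herr, dotProduct, Finset.mul_sum]
        congr 1
        exact Finset.sum_congr rfl fun i _ => by ring
    _ ≤ Real.sqrt (α ^ 2 * (w ⬝ᵥ w)) := by
        gcongr
        exact hA.dotProduct_self_inv_add_smul_one_mulVec_mulVec_le hα w
    _ = α * Real.sqrt (w ⬝ᵥ w) := by rw [Real.sqrt_mul (sq_nonneg α), Real.sqrt_sq hα.le]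

theorem tikhonov_converges_to_min_norm_solution_general
    (n m : ℕ)
    (K : Matrix (Fin m) (Fin n) ℝ)
    (y : Fin m → ℝ)
    (xd : Fin n → ℝ)
    (hxd : K.mulVec xd = y)
    (hxd_orth : ∀ z : Fin n → ℝ, K.mulVec z = 0 → ∑ i, xd i * z i = 0) :
    Tendsto
      (fun α : ℝ =>
        Real.sqrt (∑ i,
          (((Kᵀ * K + α • (1 : Matrix (Fin n) (Fin n) ℝ))⁻¹.mulVec (Kᵀ.mulVec y)) i
            - xd i) ^ 2))
      (nhdsWithin 0 (Set.Ioi 0)) (nhds 0) := by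
  subst hxd
  obtain ⟨w, hw⟩ := K.exists_transpose_mul_self_mulVec_eq_of_orthogonal_ker hxd_orth
  have hlin : Tendsto (fun α : ℝ => α * Real.sqrt (w ⬝ᵥ w)) (nhdsWithin 0 (Set.Ioi 0)) (nhds 0) :=
    ((continuous_id.mul continuous_const).tendsto' 0 0 (zero_mul _)).mono_left nhdsWithin_le_nhds
  exact squeeze_zero' (.of_forall fun _ => Real.sqrt_nonneg _)
    (eventually_nhdsWithin_of_forall fun _ hα => tikhonov_error_le_of_source_condition K hw hα) hlin

/-- Convergence of Tikhonov regularization for exact data: for `y ∈ range K`, the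
Tikhonov reconstructions `(Kᵀ K + α • I)⁻¹ (Kᵀ y)` converge in Euclidean norm to the
minimum-norm solution `x†` as `α → 0⁺`. -/
theorem tikhonov_converges_to_min_norm_solution
    (n m : ℕ)
    (K : Matrix (Fin m) (Fin n) ℝ)
    (y : Fin m → ℝ) (hy : ∃ x : Fin n → ℝ, K.mulVec x = y)
    (xd : Fin n → ℝ)
    (hxd : K.mulVec xd = y)
    (hxd_orth : ∀ z : Fin n → ℝ, K.mulVec z = 0 → ∑ i, xd i * z i = 0) :
    Tendsto
      (fun α : ℝ =>
        Real.sqrt (∑ i,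
          (((Kᵀ * K + α • (1 : Matrix (Fin n) (Fin n) ℝ))⁻¹.mulVec (Kᵀ.mulVec y)) i
            - xd i) ^ 2))
      (nhdsWithin 0 (Set.Ioi 0)) (nhds 0) :=
  tikhonov_converges_to_min_norm_solution_general n m K y xd hxd hxd_orth
end
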